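/- The only irreducible λ-quiddities over ℕ (viewed as the subset of nonnegative integers in ℤ) are (1,1,1) and (0,0,0,0). -/

import Mathlib

/-!
Every λ-quiddity over ℕ of length at least 3 contains, cyclically, two adjacent zeros or a `1`
between two positive entries. Without zeros any `1` will do, and if all entries are `≥ 2` the
bottom-left entry of `M_n` grows strictly along the product, so `M_n ≠ ± Id`. A zero `x, 0, y` with
`x, y > 0` contracts to `x + y`, because `M(y) M(0) M(x) = -M(x + y)`; the shorter quiddity has a
pattern by induction, and the pattern lifts back because the entry `x + y ≥ 2` can at most be a
neighbour of its `1`.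

A pattern `x, 1, y` gives `c ∼ (y - 1, …, x - 1) ⊕ (1, 1, 1)` and two adjacent zeros give
`c ∼ (…) ⊕ (0, 0, 0, 0)`, so an irreducible quiddity has length 3 or 4, and is then `(1, 1, 1)` or
`(0, 0, 0, 0)`. These two are irreducible: `(1, 1, 1)` is too short to be a sum, and a sum of length
4 has a summand `(1, 1, 1)`, whose middle `1` survives in the sum.
-/

/-- The matrix `[[a, -1], [1, 0]]`. -/
def mMat {A : Type*} [CommRing A] (a : A) : Matrix (Fin 2) (Fin 2) A := !![a, -1; 1, 0]

/-- `M_n(a₁, …, aₙ) = mMat aₙ * ⋯ * mMat a₁`, for the tuple given as a list `[a₁, …, aₙ]`. -/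
def mProd {A : Type*} [CommRing A] (l : List A) : Matrix (Fin 2) (Fin 2) A :=
  ((l.map mMat).reverse).prod

/-- The sum `(a₁,…,aₙ) ⊕ (b₁,…,b_m) = (a₁+b_m, a₂,…,a_{n−1}, aₙ+b₁, b₂,…,b_{m−1})`. -/
def oplus {A : Type*} [CommRing A] (a b : List A) : List A :=
  (a.headD 0 + b.getLastD 0) ::
    (a.dropLast.tail ++ (a.getLastD 0 + b.headD 0) :: b.dropLast.tail)

/-- Two tuples are equivalent if one is a cyclic rotation of the other or of its reversal. -/
def TupEquiv {A : Type*} (a b : List A) : Prop :=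
  (∃ k, b = a.rotate k) ∨ (∃ k, b = a.reverse.rotate k)

/-- A λ-quiddity over `R ⊆ A`: all entries lie in `R` and `M_n(a₁,…,aₙ) = ± Id`. -/
def IsQuiddity {A : Type*} [CommRing A] (R : Set A) (c : List A) : Prop :=
  (∀ x ∈ c, x ∈ R) ∧ (mProd c = 1 ∨ mProd c = -1)

/-- A λ-quiddity `c` over `R` is reducible if `c ∼ a ⊕ b` with `a ∈ R^m`, `m ≥ 3`,
and `b` a λ-quiddity over `R` of size `l ≥ 3`. -/
def IsReducible {A : Type*} [CommRing A] (R : Set A) (c : List A) : Prop :=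
  ∃ a b : List A, 3 ≤ a.length ∧ 3 ≤ b.length ∧ (∀ x ∈ a, x ∈ R) ∧
    IsQuiddity R b ∧ TupEquiv c (oplus a b)

/-- An irreducible λ-quiddity over `R`: a λ-quiddity of size `≥ 3` which is not reducible. -/
def IrreducibleQuiddity {A : Type*} [CommRing A] (R : Set A) (c : List A) : Prop :=
  IsQuiddity R c ∧ 3 ≤ c.length ∧ ¬ IsReducible R c

/-- The continuant `K_i(a₁,…,a_i)`, determinant of the tridiagonal matrix with diagonal
`a₁,…,a_i` and off-diagonal entries `1`; `K₀ = 1`. -/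
def cont {A : Type*} [CommRing A] : List A → A
  | [] => 1
  | [a] => a
  | a :: b :: l => a * cont (b :: l) - cont l

open List

namespace List

variable {α : Type*}

lemma IsRotated.exists_eq_append {l l' : List α} (h : l ~r l') :
    ∃ p q, l = p ++ q ∧ l' = q ++ p := by
  obtain ⟨k, rfl⟩ := h
  exact ⟨_, _, (take_append_drop (k % l.length) l).symm, rotate_eq_drop_append_take_mod⟩

-- A window `w` of the cyclic list `a :: D` either avoids the position of `a` or covers it.
lemma IsRotated.infix_or_eq_of_cons {a : α} {D w s : List α} (h : a :: D ~r w ++ s) :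
    w <:+: D ∨ ∃ w₁ w₂, w = w₁ ++ a :: w₂ ∧ D = w₂ ++ s ++ w₁ := by
  obtain ⟨p, q, hpq, hqp⟩ := h.exists_eq_append
  rcases append_eq_append_iff.mp hqp with ⟨r, rfl, rfl⟩ | ⟨r, rfl, rfl⟩
  · rcases p with _ | ⟨b, p⟩
    · rcases w with _ | ⟨b, w⟩
      · exact Or.inl nil_infix
      · obtain ⟨rfl, rfl⟩ := cons_eq_cons.mp hpq
        exact Or.inr ⟨[], w, rfl, by simp⟩
    · obtain ⟨rfl, rfl⟩ := cons_eq_cons.mp hpq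
      exact Or.inl ⟨p, r, by simp⟩
  · rcases r with _ | ⟨b, r⟩
    · rcases s with _ | ⟨b, s⟩
      · exact Or.inr ⟨[], D, by simpa using hpq.symm, by simp⟩
      · obtain ⟨rfl, rfl⟩ := cons_eq_cons.mp (by simpa using hpq)
        exact Or.inl ⟨s, [], by simp⟩
    · obtain ⟨rfl, rfl⟩ := cons_eq_cons.mp (by simpa using hpq)
      exact Or.inr ⟨q, r, rfl, by simp⟩

lemma IsInfix.exists_append_isRotated {w D : List α} (h : w <:+: D) (P : List α) :
    ∃ t, P ++ D ~r w ++ t := by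
  obtain ⟨D₁, D₂, rfl⟩ := h
  exact ⟨D₂ ++ P ++ D₁, by simpa using isRotated_append (l := P ++ D₁) (l' := w ++ D₂)⟩

lemma exists_isRotated_cons_cons_cons {a : α} {l : List α} (ha : a ∈ l) (hl : 3 ≤ l.length) :
    ∃ x y D, l ~r x :: a :: y :: D := by
  obtain ⟨p, q, rfl⟩ := append_of_mem ha
  have hrot : p ++ a :: q ~r a :: (q ++ p) := isRotated_append
  rcases hqp : q ++ p with _ | ⟨y, r⟩
  · simp_all
  rcases eq_nil_or_concat' r with rfl | ⟨D, x, rfl⟩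
  · have := congrArg length hqp; simp at this hl; omega
  refine ⟨x, y, D, hrot.trans ?_⟩
  rw [hqp]
  simpa using isRotated_append (l := a :: y :: D) (l' := [x])

lemma eq_replicate_of_isRotated {l : List α} {n : ℕ} {a : α} (h : l ~r replicate n a) :
    l = replicate n a := by
  obtain ⟨k, hk⟩ := h.symm
  rw [← hk, rotate_replicate]

end List

section Matrices

variable {A : Type*} [CommRing A]

lemma mProd_nil : mProd ([] : List A) = 1 := rfl

lemma mProd_cons (a : A) (l : List A) : mProd (a :: l) = mProd l * mMat a := by
  simp [mProd]

lemma mProd_append (l m : List A) : mProd (l ++ m) = mProd m * mProd l := by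
  simp [mProd, List.prod_append]

lemma neg_eq_one_or_neg_one_iff {M : Matrix (Fin 2) (Fin 2) A} :
    (-M = 1 ∨ -M = -1) ↔ (M = 1 ∨ M = -1) := by
  rw [neg_eq_iff_eq_neg, neg_inj, or_comm]

lemma mProd_append_comm_eq_one_or_neg_one {l m : List A}
    (h : mProd (l ++ m) = 1 ∨ mProd (l ++ m) = -1) :
    mProd (m ++ l) = 1 ∨ mProd (m ++ l) = -1 := by
  rw [mProd_append] at h ⊢
  rcases h with h | h
  · exact Or.inl (mul_eq_one_comm.mp h)
  · have : mProd m * -mProd l = 1 := by rw [mul_neg, h, neg_neg]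
    rw [← neg_eq_iff_eq_neg, ← neg_mul, mul_eq_one_comm.mp this]
    exact Or.inr rfl

lemma IsQuiddity.isRotated {R : Set A} {l l' : List A} (h : IsQuiddity R l) (hr : l ~r l') :
    IsQuiddity R l' := by
  obtain ⟨p, q, rfl, rfl⟩ := hr.exists_eq_append
  exact ⟨fun x hx => h.1 x (List.mem_append.mpr (List.mem_append.mp hx).symm),
    mProd_append_comm_eq_one_or_neg_one h.2⟩

lemma mMat_mul_mMat_zero_mul_mMat (x y : A) : mMat y * mMat 0 * mMat x = -mMat (x + y) := by
  ext i j; fin_cases i <;> fin_cases j <;> simp [mMat]; ring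

lemma mProd_cons_zero_cons (x y : A) (l : List A) :
    mProd (x :: 0 :: y :: l) = -mProd ((x + y) :: l) := by
  simp only [mProd_cons, mul_assoc]
  rw [← mul_assoc (mMat y), mMat_mul_mMat_zero_mul_mMat, mul_neg]

lemma mProd_zero_zero_cons (l : List A) : mProd (0 :: 0 :: l) = -mProd l := by
  have : mMat (0 : A) * mMat 0 = -1 := by
    ext i j; fin_cases i <;> fin_cases j <;> simp [mMat]
  rw [mProd_cons, mProd_cons, mul_assoc, this, mul_neg_one]

lemma mMat_mul_mMat_one_mul_mMat (x y : A) :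
    mMat y * mMat 1 * mMat x = mMat (y - 1) * mMat (x - 1) := by
  ext i j; fin_cases i <;> fin_cases j <;> simp [mMat] <;> ring

lemma mProd_cons_one_cons (x y : A) (l : List A) :
    mProd (x :: 1 :: y :: l) = mProd ((x - 1) :: (y - 1) :: l) := by
  simp only [mProd_cons, mul_assoc]
  rw [← mul_assoc (mMat y), mMat_mul_mMat_one_mul_mMat]

lemma mProd_cons_apply_one_zero (a : A) (l : List A) :
    mProd (a :: l) 1 0 = a * mProd l 1 0 + mProd l 1 1 := by
  simp [mProd_cons, Matrix.mul_apply, Fin.sum_univ_two, mMat, mul_comm]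

lemma mProd_cons_apply_one_one (a : A) (l : List A) : mProd (a :: l) 1 1 = -mProd l 1 0 := by
  simp [mProd_cons, Matrix.mul_apply, Fin.sum_univ_two, mMat]

lemma eq_nil_or_eq_zero_zero [Nontrivial A] {l : List A} (h : mProd l = 1 ∨ mProd l = -1)
    (hl : l.length ≤ 2) : l = [] ∨ l = [0, 0] := by
  match l, hl with
  | [], _ => exact Or.inl rfl
  | [a], _ =>
    have h11 := h.imp (congrFun₂ · 1 1) (congrFun₂ · 1 1)
    simp [mProd, mMat] at h11
  | [a, b], _ =>
    have hm : mProd [a, b] = !![b * a - 1, -b; a, -1] := by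
      ext i j; fin_cases i <;> fin_cases j <;> simp [mProd, mMat, sub_eq_add_neg]
    rw [hm] at h
    have h10 := h.imp (congrFun₂ · 1 0) (congrFun₂ · 1 0)
    have h01 := h.imp (congrFun₂ · 0 1) (congrFun₂ · 0 1)
    simp at h10 h01
    simp [h10, h01]

end Matrices

section Growth

variable {A : Type*} [CommRing A] [LinearOrder A] [IsStrictOrderedRing A]

lemma mProd_apply_one_zero_nonneg_and_pos_add {l : List A} (h : ∀ x ∈ l, 2 ≤ x) :
    0 ≤ mProd l 1 0 ∧ 0 < mProd l 1 0 + mProd l 1 1 := by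
  induction l with
  | nil => simp [mProd_nil]
  | cons a l ih =>
    obtain ⟨hu, huv⟩ := ih fun x hx => h x (List.mem_cons_of_mem a hx)
    have ha : 2 ≤ a := h a List.mem_cons_self
    rw [mProd_cons_apply_one_zero, mProd_cons_apply_one_one]
    constructor <;> nlinarith

lemma mProd_apply_one_zero_pos {l : List A} (h : ∀ x ∈ l, 2 ≤ x) (hl : l ≠ []) :
    0 < mProd l 1 0 := by
  obtain ⟨a, l, rfl⟩ := List.exists_cons_of_ne_nil hl
  obtain ⟨hu, huv⟩ :=
    mProd_apply_one_zero_nonneg_and_pos_add fun x hx => h x (List.mem_cons_of_mem a hx)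
  have ha : 2 ≤ a := h a List.mem_cons_self
  rw [mProd_cons_apply_one_zero]
  nlinarith

lemma mProd_ne_one_or_neg_one_of_two_le {l : List A} (h : ∀ x ∈ l, 2 ≤ x) (hl : l ≠ []) :
    ¬(mProd l = 1 ∨ mProd l = -1) := by
  rintro (h1 | h1) <;> simpa [h1] using (mProd_apply_one_zero_pos h hl).ne'

end Growth

section Patterns

open List

def HasAdjacentZeros (c : List ℤ) : Prop := ∃ t, c ~r 0 :: 0 :: t

def HasOneBetweenPositives (c : List ℤ) : Prop := ∃ x y t, 1 ≤ x ∧ 1 ≤ y ∧ c ~r x :: 1 :: y :: t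

lemma HasAdjacentZeros.of_isRotated {c c' : List ℤ} (hr : c ~r c') (h : HasAdjacentZeros c') :
    HasAdjacentZeros c :=
  h.imp fun _ ht => hr.trans ht

lemma HasOneBetweenPositives.of_isRotated {c c' : List ℤ} (hr : c ~r c')
    (h : HasOneBetweenPositives c') : HasOneBetweenPositives c := by
  obtain ⟨x, y, t, hx, hy, ht⟩ := h
  exact ⟨x, y, t, hx, hy, hr.trans ht⟩

lemma HasAdjacentZeros.of_contract {x y : ℤ} {D : List ℤ} (hxy : x + y ≠ 0)
    (h : HasAdjacentZeros ((x + y) :: D)) : HasAdjacentZeros (x :: 0 :: y :: D) := by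
  obtain ⟨t, ht⟩ := h
  rcases ht.infix_or_eq_of_cons (w := [0, 0]) with hD | ⟨w₁, w₂, hw, -⟩
  · exact hD.exists_append_isRotated [x, 0, y]
  · have : x + y ∈ [(0 : ℤ), 0] := by rw [hw]; simp
    simp [hxy] at this

lemma HasOneBetweenPositives.of_contract {x y : ℤ} {D : List ℤ} (hx : 1 ≤ x) (hy : 1 ≤ y)
    (h : HasOneBetweenPositives ((x + y) :: D)) : HasOneBetweenPositives (x :: 0 :: y :: D) := by
  obtain ⟨u, v, t, hu, hv, ht⟩ := h
  rcases ht.infix_or_eq_of_cons (w := [u, 1, v]) with hD | ⟨w₁, w₂, hw, rfl⟩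
  · obtain ⟨s, hs⟩ := hD.exists_append_isRotated [x, 0, y]
    exact ⟨u, v, s, hu, hv, hs⟩
  rcases w₁ with _ | ⟨_, _ | ⟨_, _ | ⟨_, w₁⟩⟩⟩ <;> simp at hw
  · obtain ⟨-, rfl, rfl⟩ := hw
    refine ⟨y, v, t ++ [x, 0], hy, hv, ?_⟩
    simpa using isRotated_append (l := [x, 0]) (l' := y :: 1 :: v :: t)
  · omega
  · obtain ⟨rfl, rfl, -, rfl⟩ := hw
    refine ⟨u, x, 0 :: y :: t, hu, hx, ?_⟩
    simpa using isRotated_append (l := x :: 0 :: y :: t) (l' := [u, 1])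

lemma IsQuiddity.contract {x y : ℤ} {D : List ℤ}
    (h : IsQuiddity {z : ℤ | 0 ≤ z} (x :: 0 :: y :: D)) (hx : 0 ≤ x) (hy : 0 ≤ y) :
    IsQuiddity {z : ℤ | 0 ≤ z} ((x + y) :: D) := by
  refine ⟨?_, ?_⟩
  · intro z hz
    rcases mem_cons.mp hz with rfl | hz
    · exact add_nonneg hx hy
    · exact h.1 z (by simp [hz])
  · rw [← neg_eq_one_or_neg_one_iff, ← mProd_cons_zero_cons]
    exact h.2

theorem hasAdjacentZeros_or_hasOneBetweenPositives {c : List ℤ}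
    (hc : IsQuiddity {z : ℤ | 0 ≤ z} c) (h3 : 3 ≤ c.length) :
    HasAdjacentZeros c ∨ HasOneBetweenPositives c := by
  induction hn : c.length using Nat.strong_induction_on generalizing c with
  | _ n ih =>
  have hmem {x y : ℤ} {D : List ℤ} {a : ℤ} (hr : c ~r x :: a :: y :: D) : 0 ≤ x ∧ 0 ≤ y :=
    ⟨hc.1 x (hr.mem_iff.mpr (by simp)), hc.1 y (hr.mem_iff.mpr (by simp))⟩
  by_cases h0 : (0 : ℤ) ∈ c
  · obtain ⟨x, y, D, hr⟩ := exists_isRotated_cons_cons_cons h0 h3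
    obtain ⟨hx, hy⟩ := hmem hr
    rcases hx.eq_or_lt with rfl | hx
    · exact Or.inl ⟨y :: D, hr⟩
    rcases hy.eq_or_lt with rfl | hy
    · refine Or.inl ⟨D ++ [x], hr.trans ?_⟩
      simpa using isRotated_append (l := [x]) (l' := 0 :: 0 :: D)
    have hq := (hc.isRotated hr).contract hx.le hy.le
    have hlen : ((x + y) :: D).length + 2 = n := by rw [← hn, hr.perm.length_eq]; simp
    by_cases hD : ((x + y) :: D).length ≤ 2
    · rcases eq_nil_or_eq_zero_zero hq.2 hD with h | h <;> simp at h; omega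
    rcases ih _ (by omega) hq (by omega) rfl with h | h
    · exact Or.inl ((h.of_contract (by omega)).of_isRotated hr)
    · exact Or.inr ((h.of_contract hx hy).of_isRotated hr)
  by_cases h1 : (1 : ℤ) ∈ c
  · obtain ⟨x, y, D, hr⟩ := exists_isRotated_cons_cons_cons h1 h3
    obtain ⟨hx, hy⟩ := hmem hr
    have hx0 : x ≠ 0 := fun h => h0 (hr.mem_iff.mpr (by simp [h]))
    have hy0 : y ≠ 0 := fun h => h0 (hr.mem_iff.mpr (by simp [h]))
    exact Or.inr ⟨x, y, D, by omega, by omega, hr⟩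
  have h2 : ∀ z ∈ c, 2 ≤ z := fun z hz => by
    have : 0 ≤ z := hc.1 z hz
    have : z ≠ 0 := fun h => h0 (h ▸ hz)
    have : z ≠ 1 := fun h => h1 (h ▸ hz)
    omega
  exact (mProd_ne_one_or_neg_one_of_two_le h2 (ne_nil_of_length_pos (by omega)) hc.2).elim

end Patterns

section Sums

variable {A : Type*} [CommRing A]

lemma oplus_cons_concat (a₀ aₙ b₀ bₘ : A) (a b : List A) :
    oplus (a₀ :: (a ++ [aₙ])) (b₀ :: (b ++ [bₘ])) = (a₀ + bₘ) :: (a ++ (aₙ + b₀) :: b) := by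
  rw [oplus, ← List.cons_append (a := a₀), ← List.cons_append (a := b₀), List.getLastD_concat,
    List.getLastD_concat, List.dropLast_concat, List.dropLast_concat]
  rfl

lemma length_oplus {a b : List A} (ha : 2 ≤ a.length) (hb : 2 ≤ b.length) :
    (oplus a b).length = a.length + b.length - 2 := by
  simp [oplus]; omega

end Sums

namespace TupEquiv

variable {α : Type*} {c d : List α}

lemma length_eq (h : TupEquiv c d) : c.length = d.length := by
  rcases h with ⟨k, rfl⟩ | ⟨k, rfl⟩ <;> simp

lemma of_isRotated (h : c ~r d) : TupEquiv c d :=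
  Or.inl (h.imp fun _ => Eq.symm)

lemma mem_iff (h : TupEquiv c d) {x : α} : x ∈ c ↔ x ∈ d := by
  rcases h with ⟨k, rfl⟩ | ⟨k, rfl⟩ <;> simp

end TupEquiv

section Reduction

open List

lemma isReducible_of_hasOneBetweenPositives {c : List ℤ} (hc : ∀ z ∈ c, z ∈ {z : ℤ | 0 ≤ z})
    (h : HasOneBetweenPositives c) (h4 : 4 ≤ c.length) : IsReducible {z : ℤ | 0 ≤ z} c := by
  obtain ⟨x, y, t, hx, hy, hr⟩ := h
  have ht : 1 ≤ t.length := by have := hr.perm.length_eq; simp at this; omega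
  refine ⟨(y - 1) :: (t ++ [x - 1]), [1, 1, 1], by simp; omega, by simp, ?_,
    ⟨by simp, by decide⟩, ?_⟩
  · simp only [mem_cons, mem_append, not_mem_nil, or_false]
    rintro z (rfl | hz | rfl)
    · show 0 ≤ y - 1; omega
    · exact hc z (hr.mem_iff.mpr (by simp [hz]))
    · show 0 ≤ x - 1; omega
  · refine TupEquiv.of_isRotated (hr.trans ?_)
    rw [show [(1 : ℤ), 1, 1] = 1 :: ([1] ++ [1]) from rfl, oplus_cons_concat]
    simpa using isRotated_append (l := [x, 1]) (l' := y :: t)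

lemma isReducible_of_hasAdjacentZeros {c : List ℤ} (hc : ∀ z ∈ c, z ∈ {z : ℤ | 0 ≤ z})
    (h : HasAdjacentZeros c) (h5 : 5 ≤ c.length) : IsReducible {z : ℤ | 0 ≤ z} c := by
  obtain ⟨t, hr⟩ := h
  have ht : 3 ≤ t.length := by have := hr.perm.length_eq; simp at this; omega
  refine ⟨t, [0, 0, 0, 0], ht, by simp, fun z hz => hc z (hr.mem_iff.mpr (by simp [hz])),
    ⟨by simp, by decide⟩, TupEquiv.of_isRotated (hr.trans ?_)⟩
  obtain ⟨t₀, t, rfl⟩ := exists_cons_of_length_pos (by omega : 0 < t.length)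
  obtain ⟨t, tₙ, rfl⟩ := (eq_nil_or_concat' t).resolve_left (by rintro rfl; simp at ht)
  rw [show [(0 : ℤ), 0, 0, 0] = 0 :: ([0, 0] ++ [0]) from rfl, oplus_cons_concat]
  simpa using isRotated_append (l := [0, 0]) (l' := t₀ :: (t ++ [tₙ]))

end Reduction

section Classification

open List

lemma eq_one_one_one_of_length_eq_three {c : List ℤ} (hc : IsQuiddity {z : ℤ | 0 ≤ z} c)
    (h3 : c.length = 3) : c = [1, 1, 1] := by
  rcases hasAdjacentZeros_or_hasOneBetweenPositives hc h3.ge with ⟨t, hr⟩ | ⟨x, y, t, -, -, hr⟩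
  · have hq := (hc.isRotated hr).2
    rw [mProd_zero_zero_cons, neg_eq_one_or_neg_one_iff] at hq
    have ht : t.length = 1 := by have := hr.perm.length_eq; simp at this; omega
    rcases eq_nil_or_eq_zero_zero hq (by omega) with rfl | rfl <;> simp at ht
  · obtain rfl : t = [] := by have := hr.perm.length_eq; simpa [h3] using this
    have hq := (hc.isRotated hr).2
    rw [mProd_cons_one_cons] at hq
    obtain ⟨hx, hy⟩ : x - 1 = 0 ∧ y - 1 = 0 := by simpa using eq_nil_or_eq_zero_zero hq (by simp)
    obtain ⟨rfl, rfl⟩ : x = 1 ∧ y = 1 := ⟨by omega, by omega⟩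
    exact eq_replicate_of_isRotated (n := 3) hr

lemma eq_zero_zero_zero_zero_of_hasAdjacentZeros {c : List ℤ}
    (hc : IsQuiddity {z : ℤ | 0 ≤ z} c) (h : HasAdjacentZeros c) (h4 : c.length = 4) :
    c = [0, 0, 0, 0] := by
  obtain ⟨t, hr⟩ := h
  have hq := (hc.isRotated hr).2
  rw [mProd_zero_zero_cons, neg_eq_one_or_neg_one_iff] at hq
  have ht : t.length = 2 := by have := hr.perm.length_eq; simp at this; omega
  rcases eq_nil_or_eq_zero_zero hq ht.le with rfl | rfl
  · simp at ht
  · exact eq_replicate_of_isRotated (n := 4) hr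

lemma irreducibleQuiddity_one_one_one : IrreducibleQuiddity {z : ℤ | 0 ≤ z} [1, 1, 1] := by
  refine ⟨⟨by simp, by decide⟩, by simp, ?_⟩
  rintro ⟨a, b, ha, hb, -, -, he⟩
  have := he.length_eq
  rw [length_oplus (by omega) (by omega)] at this
  simp at this
  omega

lemma irreducibleQuiddity_zero_zero_zero_zero :
    IrreducibleQuiddity {z : ℤ | 0 ≤ z} [0, 0, 0, 0] := by
  refine ⟨⟨by simp, by decide⟩, by simp, ?_⟩
  rintro ⟨a, b, ha, hb, -, hq, he⟩
  have hlen := he.length_eq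
  rw [length_oplus (by omega) (by omega)] at hlen
  obtain rfl := eq_one_one_one_of_length_eq_three hq (by simp at hlen; omega)
  have : (1 : ℤ) ∈ oplus a [1, 1, 1] := by simp [oplus]
  simpa using he.mem_iff.mpr this

end Classification

/-- The only irreducible λ-quiddities over `ℕ` (the nonnegative integers in `ℤ`) are
`(1,1,1)` and `(0,0,0,0)`. -/
theorem stmt7 (c : List ℤ) :
    IrreducibleQuiddity {x : ℤ | 0 ≤ x} c ↔ c = [1, 1, 1] ∨ c = [0, 0, 0, 0] := by
  constructor
  · rintro ⟨hc, h3, hirr⟩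
    rcases h3.eq_or_lt with h3 | h4
    · exact Or.inl (eq_one_one_one_of_length_eq_three hc h3.symm)
    rcases hasAdjacentZeros_or_hasOneBetweenPositives hc h3 with h | h
    · rcases (Nat.succ_le_of_lt h4).eq_or_lt with h4 | h5
      · exact Or.inr (eq_zero_zero_zero_zero_of_hasAdjacentZeros hc h h4.symm)
      · exact (hirr (isReducible_of_hasAdjacentZeros hc.1 h h5)).elim
    · exact (hirr (isReducible_of_hasOneBetweenPositives hc.1 h h4)).elim
  · rintro (rfl | rfl)
    · exact irreducibleQuiddity_one_one_one
    · exact irreducibleQuiddity_zero_zero_zero_zero
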